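/- arXiv:1603.04691 — 5 statements merged into one kernel-verified Lean document; each statement's English description precedes it below -/
import Mathlib

section
/- Let G be a group, τ an automorphism of G, and t ∈ G with τ² = Int(t) (conjugation by t) and τ(t) = t. Let (π, V) be a representation of G over ℂ and ⟨·,·⟩ : V × V → ℂ a non-degenerate bilinear pairing satisfying ⟨π(τ(g))x, π(g)y⟩ = ⟨x,y⟩ for all g ∈ G, x, y ∈ V. Assume that any bilinear form V × V → ℂ invariant in this twisted sense is a scalar multiple of ⟨·,·⟩ (e.g. π irreducible). Then there exists C ∈ {±1} such that ⟨π(t)y, x⟩ = C⟨x,y⟩ for all x, y ∈ V. -/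
/-- Existence of the parity `C ∈ {±1}` for a conjugate self-dual representation:
if `τ` is an automorphism of `G` with `τ² = Int t`, `τ t = t`, and `B` is a
non-degenerate twisted-invariant bilinear pairing on the representation `π`, unique
up to scalar among twisted-invariant pairings (Schur hypothesis), then there is
`C = ±1` with `B (π t y) x = C * B x y`. -/
theorem parity_exists {G V : Type*} [Group G] [AddCommGroup V] [Module ℂ V]
    (τ : G ≃* G) (t : G)
    (hτ2 : ∀ g : G, τ (τ g) = t * g * t⁻¹) (hτt : τ t = t)
    (π : Representation ℂ G V)
    (B : V →ₗ[ℂ] V →ₗ[ℂ] ℂ)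
    (hB1 : ∀ x : V, (∀ y : V, B x y = 0) → x = 0)
    (hB2 : ∀ y : V, (∀ x : V, B x y = 0) → y = 0)
    (hinv : ∀ (g : G) (x y : V), B (π (τ g) x) (π g y) = B x y)
    (hschur : ∀ B' : V →ₗ[ℂ] V →ₗ[ℂ] ℂ,
      (∀ (g : G) (x y : V), B' (π (τ g) x) (π g y) = B' x y) → ∃ c : ℂ, B' = c • B) :
    ∃ C : ℂ, (C = 1 ∨ C = -1) ∧ ∀ x y : V, B (π t y) x = C * B x y := by
  set B' : V →ₗ[ℂ] V →ₗ[ℂ] ℂ := B.flip.compl₂ (π t) with hB'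
  have hB'app : ∀ x y : V, B' x y = B (π t y) x := fun x y => rfl
  have hinv' : ∀ (g : G) (x y : V), B' (π (τ g) x) (π g y) = B' x y := by
    intro g x y
    rw [hB'app, hB'app]
    have h1 : (π t) ((π g) y) = (π (τ (τ g))) ((π t) y) := by
      rw [hτ2, map_mul, map_mul, Module.End.mul_apply, Module.End.mul_apply,
        ← Module.End.mul_apply (π t⁻¹) (π t), ← map_mul, inv_mul_cancel, map_one,
        Module.End.one_apply]
    rw [h1]
    exact hinv (τ g) ((π t) y) x
  obtain ⟨c, hc⟩ := hschur B' hinv'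
  have key : ∀ x y : V, B (π t y) x = c * B x y := by
    intro x y
    have := congrArg (fun f => f x y) hc
    simpa [hB'app] using this
  by_cases hz : ∀ x y : V, B x y = 0
  · exact ⟨1, Or.inl rfl, fun x y => by simp [key, hz]⟩
  · push_neg at hz
    obtain ⟨x, y, hxy⟩ := hz
    have hinvt : B (π t x) (π t y) = B x y := by
      have := hinv t x y; rwa [hτt] at this
    have h2 := key ((π t) y) x
    rw [key x y] at h2
    have hc2 : c * c = 1 := by
      have h3 : B x y = c * (c * B x y) := hinvt.symm.trans h2
      have h4 : (c * c - 1) * B x y = 0 := by linear_combination -h3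
      rcases mul_eq_zero.mp h4 with h | h
      · exact sub_eq_zero.mp h
      · exact absurd h hxy
    exact ⟨c, mul_self_eq_one_iff.mp hc2, key⟩
end

section
/- Let G be a group, τ an automorphism of G with τ² = Int(t), τ(t) = t, and (π, V) a representation with a pairing ⟨·,·⟩ satisfying ⟨π(τ(g))x, π(g)y⟩ = ⟨x,y⟩ and ⟨π(t)y, x⟩ = C⟨x,y⟩ for some scalar C ∈ ℂ. If the pairing is nonzero, then C² = 1. -/
/-- If the twisted-invariant pairing `B` of a representation `π` satisfies
`B (π t y) x = C * B x y` and `B` is nonzero, then `C² = 1`. -/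
theorem parity_sq_eq_one {G V : Type*} [Group G] [AddCommGroup V] [Module ℂ V]
    (τ : G ≃* G) (t : G)
    (hτ2 : ∀ g : G, τ (τ g) = t * g * t⁻¹) (hτt : τ t = t)
    (π : Representation ℂ G V)
    (B : V →ₗ[ℂ] V →ₗ[ℂ] ℂ) (C : ℂ)
    (hinv : ∀ (g : G) (x y : V), B (π (τ g) x) (π g y) = B x y)
    (hpar : ∀ x y : V, B (π t y) x = C * B x y)
    (hBne : B ≠ 0) :
    C ^ 2 = 1 := by
  obtain ⟨x, y, hxy⟩ : ∃ x y, B x y ≠ 0 := by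
    by_contra h
    push_neg at h
    exact hBne (by ext x y; simp [h])
  have key : B x y = C ^ 2 * B x y := by
    have h1 := hinv t x y
    rw [hτt] at h1
    calc B x y = B (π t x) (π t y) := h1.symm
      _ = C * B (π t y) x := hpar (π t y) x
      _ = C * (C * B x y) := by rw [hpar x y]
      _ = C ^ 2 * B x y := by ring
  have : (C ^ 2 - 1) * B x y = 0 := by linear_combination -key
  rcases mul_eq_zero.mp this with h | h
  · exact sub_eq_zero.mp h
  · exact absurd h hxy
end

section
/- Let G be a group with automorphism τ and t with τ² = Int(t), τ(t) = t. If (π, V) is a conjugate self-dual finite-dimensional irreducible representation of odd dimension m, then its parity C_π equals det π(t). -/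
/-!
If `A` is the matrix of `π t` and `M` the Gram matrix of `B` in some basis, the parity relation
reads `Aᵀ M = C Mᵀ`. Since `B` is nondegenerate, `det M ≠ 0`, so taking determinants gives
`det π(t) = C ^ m`, and `C ^ m = C` because `C = ±1` and `m` is odd.
-/

open Module
open scoped Matrix

theorem LinearMap.toMatrix₂_flip {R M₁ M₂ ι₁ ι₂ : Type*} [CommRing R] [AddCommMonoid M₁]
    [Module R M₁] [AddCommMonoid M₂] [Module R M₂] [Fintype ι₁] [DecidableEq ι₁] [Fintype ι₂]
    [DecidableEq ι₂] (b₁ : Basis ι₁ R M₁) (b₂ : Basis ι₂ R M₂) (B : M₁ →ₗ[R] M₂ →ₗ[R] R) :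
    LinearMap.toMatrix₂ b₂ b₁ B.flip = (LinearMap.toMatrix₂ b₁ b₂ B)ᵀ := by
  ext i j
  simp [LinearMap.toMatrix₂_apply]

theorem LinearMap.det_eq_pow_finrank_of_comp_eq_smul_flip {K V : Type*} [Field K]
    [AddCommGroup V] [Module K V] [FiniteDimensional K V] {B : V →ₗ[K] V →ₗ[K] K}
    (hB : B.SeparatingLeft) {T : V →ₗ[K] V} {c : K} (h : B.comp T = c • B.flip) :
    LinearMap.det T = c ^ finrank K V := by
  let b := finBasis K V
  have hGram : (LinearMap.toMatrix₂ b b B).det ≠ 0 :=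
    (LinearMap.separatingLeft_iff_det_ne_zero b).mp hB
  have hdet := congrArg (fun B' => (LinearMap.toMatrix₂ b b B').det) h
  simp only [LinearMap.toMatrix₂_comp b b, map_smul, LinearMap.toMatrix₂_flip, Matrix.det_mul,
    Matrix.det_transpose, Matrix.det_smul, Fintype.card_fin, LinearMap.det_toMatrix] at hdet
  exact mul_right_cancel₀ hGram hdet

theorem pow_eq_self_of_odd {M : Type*} [Monoid M] [HasDistribNeg M] {c : M}
    (hc : c = 1 ∨ c = -1) {n : ℕ} (hn : Odd n) : c ^ n = c := by
  rcases hc with rfl | rfl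
  · exact one_pow n
  · exact hn.neg_one_pow

theorem parity_odd_dim_general {G V : Type*} [Group G] [AddCommGroup V] [Module ℂ V]
    [FiniteDimensional ℂ V] (m : ℕ) (hm : Module.finrank ℂ V = m) (hodd : Odd m)
    (t : G)
    (π : Representation ℂ G V)
    (B : V →ₗ[ℂ] V →ₗ[ℂ] ℂ)
    (hB1 : ∀ x : V, (∀ y : V, B x y = 0) → x = 0)
    (C : ℂ) (hC : C = 1 ∨ C = -1)
    (hpar : ∀ x y : V, B (π t y) x = C * B x y) :
    C = LinearMap.det (π t) := by
  have hcomp : B.comp (π t) = C • B.flip := by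
    ext y x
    exact hpar x y
  rw [LinearMap.det_eq_pow_finrank_of_comp_eq_smul_flip hB1 hcomp, hm, pow_eq_self_of_odd hC hodd]

/-- The parity of a conjugate self-dual irreducible representation of odd
dimension `m` equals `det (π t)`. -/
theorem parity_odd_dim {G V : Type*} [Group G] [AddCommGroup V] [Module ℂ V]
    [FiniteDimensional ℂ V] (m : ℕ) (hm : Module.finrank ℂ V = m) (hodd : Odd m)
    (τ : G ≃* G) (t : G)
    (hτ2 : ∀ g : G, τ (τ g) = t * g * t⁻¹) (hτt : τ t = t)
    (π : Representation ℂ G V)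
    (hirr : ∀ W : Submodule ℂ V, (∀ (g : G), ∀ x ∈ W, π g x ∈ W) → W = ⊥ ∨ W = ⊤)
    (B : V →ₗ[ℂ] V →ₗ[ℂ] ℂ)
    (hB1 : ∀ x : V, (∀ y : V, B x y = 0) → x = 0)
    (hB2 : ∀ y : V, (∀ x : V, B x y = 0) → y = 0)
    (hinv : ∀ (g : G) (x y : V), B (π (τ g) x) (π g y) = B x y)
    (C : ℂ) (hC : C = 1 ∨ C = -1)
    (hpar : ∀ x y : V, B (π t y) x = C * B x y) :
    C = LinearMap.det (π t) :=
  parity_odd_dim_general m hm hodd t π B hB1 C hC hpar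
end

section
/- Let G be a group with automorphism τ and t ∈ G with τ² = Int(t), τ(t) = t. Let H ≤ G be a subgroup, χ : H → ℂ× a character, and a ∈ G satisfying aHa⁻¹ = τ⁻¹(H) and χ(h)⁻¹ = χ(τ(aha⁻¹)) for all h ∈ H. Then the element z = τ(a)·t·a normalizes H and fixes χ, i.e., zHz⁻¹ = H and χ(z⁻¹hz) = χ(h) for all h ∈ H. -/
/-- If `a` intertwines `(H, χ⁻¹)` and `(τ⁻¹(H), χ ∘ τ)`, then `z = τ(a)·t·a`
normalizes `H` and fixes `χ`. -/
theorem normalizer_z {G : Type*} [Group G] (τ : G ≃* G) (t : G)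
    (hτ2 : ∀ g : G, τ (τ g) = t * g * t⁻¹) (hτt : τ t = t)
    (H : Subgroup G) (χ : H →* ℂˣ) (a : G)
    (hconj : ∀ g : G, a * g * a⁻¹ ∈ (H.comap τ.toMonoidHom : Subgroup G) ↔ g ∈ H)
    (hchi : ∀ (h : G) (hh : h ∈ H) (hm : τ (a * h * a⁻¹) ∈ H),
      (χ ⟨h, hh⟩)⁻¹ = χ ⟨τ (a * h * a⁻¹), hm⟩) :
    (∀ g : G, (τ a * t * a) * g * (τ a * t * a)⁻¹ ∈ H ↔ g ∈ H) ∧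
    (∀ (h : G) (hh : h ∈ H)
      (hm : (τ a * t * a)⁻¹ * h * (τ a * t * a) ∈ H),
      χ ⟨(τ a * t * a)⁻¹ * h * (τ a * t * a), hm⟩ = χ ⟨h, hh⟩) := by
  have hφ : ∀ g : G, τ (a * g * a⁻¹) ∈ H ↔ g ∈ H := by
    intro g
    simpa [Subgroup.mem_comap] using hconj g
  have key : ∀ g : G, (τ a * t * a) * g * (τ a * t * a)⁻¹
      = τ (a * τ (a * g * a⁻¹) * a⁻¹) := by
    intro g
    simp only [map_mul, map_inv, hτ2]
    group
  have mem : ∀ g : G, (τ a * t * a) * g * (τ a * t * a)⁻¹ ∈ H ↔ g ∈ H := by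
    intro g
    rw [key g, hφ, hφ]
  refine ⟨mem, ?_⟩
  intro h hh hm
  set z := τ a * t * a with hz
  have hm2 : τ (a * (z⁻¹ * h * z) * a⁻¹) ∈ H := by
    rw [hφ]
    exact hm
  have e1 := hchi (z⁻¹ * h * z) hm hm2
  have e2 := hchi _ hm2 (by rw [hφ]; exact hm2)
  have heq : τ (a * τ (a * (z⁻¹ * h * z) * a⁻¹) * a⁻¹) = h := by
    rw [← key (z⁻¹ * h * z)]
    group
  rw [← e1, inv_inv] at e2
  rw [e2]
  congr 1
  exact Subtype.ext heq
end

section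
/- Let Fₙ[Π] be as in the division algebra presentation with Πⁿ = ϖ, Πa = σ(a)Π. Suppose F/F⁺ is tamely ramified quadratic, τ the generator of Gal(Fₙ/Fₙ⁺) (commuting with σ), ϖ chosen with τ(ϖ) = −ϖ, and α ∈ μ_{qⁿ−1}(Fₙ⁺) with Nr_{Fₙ/F}(α) = −1 (e.g. α = β^{q−1} with β^{qⁿ−1} = −1). Define τ : D → D by τ|_{Fₙ} = τ and τ(Π) = αΠ. Then τ is well-defined: (αΠ)ⁿ = −ϖ = τ(ϖ) and (αΠ)τ(a) = τ(σ(a))(αΠ) for a ∈ Fₙ. Moreover with t = β⁻², τ²(d) = t d t⁻¹ for all d ∈ D and τ(t) = t. -/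
section Aux
variable {K A : Type*} [Field K] [DivisionRing A]

lemma aux_pow_rel (ι : K →+* A) (σ : K ≃+* K) (X : A)
    (hrel : ∀ a : K, X * ι a = ι (σ a) * X) :
    ∀ (k : ℕ) (a : K), X ^ k * ι a = ι (σ^[k] a) * X ^ k := by
  intro k
  induction k with
  | zero => intro a; simp
  | succ k ih =>
      intro a
      rw [pow_succ, mul_assoc, hrel, ← mul_assoc, ih, mul_assoc, ← pow_succ,
        Function.iterate_succ_apply]

lemma aux_delta (ι : K →+* A) (m : ℕ) (X : A) (a : K) :
    ∑ i : Fin (m+1), ι (if i = 0 then a else 0) * X ^ (i:ℕ) = ι a := by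
  rw [Fin.sum_univ_succ]
  simp [Fin.succ_ne_zero]

lemma aux_shift (ι : K →+* A) (m : ℕ) (X : A) (w : K) (hXn : X ^ (m+1) = ι w)
    (d : Fin (m+1) → K) :
    (∑ i : Fin (m+1), ι (d i) * X ^ (i:ℕ)) * X
      = ∑ i : Fin (m+1),
          ι ((Fin.cases (d (Fin.last m) * w) (fun j => d j.castSucc) :
              Fin (m+1) → K) i) * X ^ (i:ℕ) := by
  rw [Finset.sum_mul]
  have lhs : ∀ i : Fin (m+1), ι (d i) * X ^ (i:ℕ) * X = ι (d i) * X ^ ((i:ℕ)+1) := by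
    intro i; rw [mul_assoc, ← pow_succ]
  simp only [lhs]
  rw [Fin.sum_univ_castSucc, Fin.sum_univ_succ]
  simp only [Fin.cases_zero, Fin.cases_succ, Fin.coe_castSucc, Fin.val_succ,
    Fin.val_last, pow_zero, mul_one]
  rw [hXn, ← map_mul]
  simp only [Fin.val_zero, pow_zero, mul_one]
  exact add_comm _ _

def auxConj (u : A) (hu : u ≠ 0) : A →+* A where
  toFun := fun x => u * x * u⁻¹
  map_one' := by show u * 1 * u⁻¹ = 1; rw [mul_one, mul_inv_cancel₀ hu]
  map_mul' := fun x y => by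
    show u*(x*y)*u⁻¹ = (u*x*u⁻¹)*(u*y*u⁻¹)
    simp [mul_assoc, inv_mul_cancel_left₀ hu]
  map_zero' := by simp
  map_add' := fun x y => by
    show u*(x+y)*u⁻¹ = u*x*u⁻¹ + u*y*u⁻¹
    rw [mul_add, add_mul]

end Aux

/-- Ramified case: let `A = Fₙ[Π]` be the cyclic-algebra presentation of the
division algebra of invariant `1/n` (`Pⁿ = ϖ`, `P a = σ(a) P`, basis
`1, P, …, P^(n−1)`), `τ₀` the generator of `Gal(Fₙ/Fₙ⁺)` (an involution
commuting with `σ`) with `τ₀ ϖ = −ϖ`, and `α = β^(q−1)` where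
`β^(qⁿ−1) = −1`, `σ β = β^q`, `τ₀ β = β`. Then `α P` satisfies the defining
relations twisted by `τ₀` (well-definedness), and there is a ring automorphism
`T` of `A` with `T|_{Fₙ} = τ₀`, `T P = α P`, such that with `t = β⁻²` one has
`T² = Int(t)` and `T t = t`. -/
theorem division_algebra_tau_ramified {K A : Type*} [Field K] [DivisionRing A]
    (ι : K →+* A) (σ τ₀ : K ≃+* K) (ϖ α β : K) (q n : ℕ)
    (hq : 1 < q) (hn : 0 < n)
    (P : A) (hP0 : P ≠ 0)
    (hPn : P ^ n = ι ϖ)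
    (hrel : ∀ a : K, P * ι a = ι (σ a) * P)
    (hτ2 : ∀ a : K, τ₀ (τ₀ a) = a)
    (hcomm : ∀ a : K, τ₀ (σ a) = σ (τ₀ a))
    (hτϖ : τ₀ ϖ = -ϖ) (hσϖ : σ ϖ = ϖ)
    (hα : α = β ^ (q - 1)) (hβ : β ^ (q ^ n - 1) = -1)
    (hσβ : σ β = β ^ q) (hτβ : τ₀ β = β)
    (hbasis : ∀ x : A, ∃! c : Fin n → K,
      x = ∑ i : Fin n, ι (c i) * P ^ (i : ℕ)) :
    (ι α * P) ^ n = ι (τ₀ ϖ) ∧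
    (∀ a : K, (ι α * P) * ι (τ₀ a) = ι (τ₀ (σ a)) * (ι α * P)) ∧
    ∃ T : A ≃+* A,
      (∀ a : K, T (ι a) = ι (τ₀ a)) ∧
      T P = ι α * P ∧
      (∀ d : A, T (T d) = ι (β⁻¹ ^ 2) * d * (ι (β⁻¹ ^ 2))⁻¹) ∧
      T (ι (β⁻¹ ^ 2)) = ι (β⁻¹ ^ 2) := by
  obtain ⟨m, rfl⟩ : ∃ m, n = m + 1 := ⟨n - 1, by omega⟩
  obtain ⟨r, rfl⟩ : ∃ r, q = r + 2 := ⟨q - 2, by omega⟩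
  set Q : A := ι α * P with hQdef
  -- basic facts
  have hβ0 : β ≠ 0 := by
    intro h
    have h1 : 1 < (r+2) ^ (m+1) := Nat.one_lt_pow (by omega) (by omega)
    rw [h, zero_pow (by omega)] at hβ
    exact one_ne_zero (neg_eq_zero.mp hβ.symm)
  have hrelQ : ∀ a : K, Q * ι a = ι (σ a) * Q := by
    intro a
    rw [hQdef, mul_assoc, hrel, ← mul_assoc, ← map_mul, mul_comm α (σ a), map_mul,
      mul_assoc]
  -- iterates of σ
  have hσkβ : ∀ k : ℕ, σ^[k] β = β ^ (r+2) ^ k := by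
    intro k
    induction k with
    | zero => simp
    | succ k ih =>
        rw [Function.iterate_succ_apply', ih, map_pow, hσβ, ← pow_mul, pow_succ']
  have hσkα : ∀ k : ℕ, σ^[k] α = β ^ ((r+2) ^ k * ((r+2) - 1)) := by
    intro k
    induction k with
    | zero => simpa using hα
    | succ k ih =>
        rw [Function.iterate_succ_apply', ih, map_pow, hσβ, ← pow_mul, pow_succ']
        ring_nf
  have hcommk : ∀ (k : ℕ) (a : K), τ₀ (σ^[k] a) = σ^[k] (τ₀ a) := by
    intro k
    induction k with
    | zero => intro a; simp
    | succ k ih =>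
        intro a
        rw [Function.iterate_succ_apply', hcomm, ih]
        exact (Function.iterate_succ_apply' _ _ _).symm
  -- power formula for Q
  have hQpow : ∀ k : ℕ, Q ^ k = ι (β ^ ((r+2) ^ k - 1)) * P ^ k := by
    intro k
    induction k with
    | zero => simp
    | succ k ih =>
        rw [pow_succ, ih, hQdef, ← mul_assoc, mul_assoc (ι (β ^ ((r+2) ^ k - 1))),
          aux_pow_rel ι σ P hrel, hσkα, ← mul_assoc, ← map_mul, ← pow_add]
        rw [mul_assoc, ← pow_succ]
        congr 2
        congr 1
        have h1 : 1 ≤ (r+2) ^ k := Nat.one_le_pow _ _ (by omega)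
        have h3 : (r+2) ^ k ≤ (r+2) ^ k * (r+2) := Nat.le_mul_of_pos_right _ (by omega)
        have e1 : (r+2) ^ k * ((r+2) - 1) = (r+2) ^ k * (r+2) - (r+2) ^ k := by
          rw [Nat.mul_sub, mul_one]
        rw [e1, pow_succ]
        omega
  have hQn : Q ^ (m+1) = ι (τ₀ ϖ) := by
    rw [hQpow, hPn, hτϖ, hβ, ← map_mul, neg_one_mul]
  have goal2 : ∀ a : K, Q * ι (τ₀ a) = ι (τ₀ (σ a)) * Q := by
    intro a; rw [hrelQ, hcomm]
  -- choose coefficients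
  choose c hc hcu using hbasis
  obtain ⟨Tf, hTf⟩ : ∃ Tf : A → A, ∀ (x : A) (d : Fin (m+1) → K),
      x = ∑ i : Fin (m+1), ι (d i) * P ^ (i:ℕ) →
      Tf x = ∑ i : Fin (m+1), ι (τ₀ (d i)) * Q ^ (i:ℕ) :=
    ⟨fun x => ∑ i : Fin (m+1), ι (τ₀ (c x i)) * Q ^ (i:ℕ),
     fun x d h => by rw [hcu x d h]⟩
  have hT1 : Tf 1 = 1 := by
    rw [hTf 1 (fun i => if i = 0 then 1 else 0)
      (by rw [aux_delta ι m P 1, map_one])]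
    have he : ∀ i : Fin (m+1), τ₀ (if i = 0 then (1:K) else 0)
        = if i = 0 then (1:K) else 0 := by
      intro i; split <;> simp
    simp only [he]
    rw [aux_delta ι m Q 1, map_one]
  have hT0 : Tf 0 = 0 := by
    rw [hTf 0 0 (by simp)]; simp
  have hTadd : ∀ x y, Tf (x + y) = Tf x + Tf y := by
    intro x y
    rw [hTf x (c x) (hc x), hTf y (c y) (hc y),
      hTf (x+y) (c x + c y) (by
        simp only [Pi.add_apply, map_add, add_mul, Finset.sum_add_distrib]
        rw [← hc x, ← hc y]),
      ← Finset.sum_add_distrib]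
    refine Finset.sum_congr rfl fun i _ => ?_
    rw [Pi.add_apply, map_add, map_add, add_mul]
  have hTsmul : ∀ (a : K) (x : A), Tf (ι a * x) = ι (τ₀ a) * Tf x := by
    intro a x
    rw [hTf x (c x) (hc x),
      hTf (ι a * x) (fun i => a * c x i) (by
        conv_lhs => rw [hc x]
        rw [Finset.mul_sum]
        refine Finset.sum_congr rfl fun i _ => ?_
        rw [← mul_assoc, ← map_mul]),
      Finset.mul_sum]
    refine Finset.sum_congr rfl fun i _ => ?_
    rw [map_mul, map_mul, mul_assoc]
  have hTι : ∀ a : K, Tf (ι a) = ι (τ₀ a) := by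
    intro a
    have h := hTsmul a 1
    rwa [mul_one, hT1, mul_one] at h
  have hTright : ∀ (x : A) (a : K), Tf (x * ι a) = Tf x * ι (τ₀ a) := by
    intro x a
    rw [hTf (x * ι a) (fun i => c x i * (⇑σ)^[(i:ℕ)] a) (by
        conv_lhs => rw [hc x]
        rw [Finset.sum_mul]
        refine Finset.sum_congr rfl fun i _ => ?_
        rw [mul_assoc, aux_pow_rel ι σ P hrel, ← mul_assoc, ← map_mul]),
      hTf x (c x) (hc x), Finset.sum_mul]
    refine Finset.sum_congr rfl fun i _ => ?_
    rw [map_mul, map_mul, hcommk, mul_assoc, ← aux_pow_rel ι σ Q hrelQ, ← mul_assoc]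
  have hTmulP : ∀ x : A, Tf (x * P) = Tf x * Q := by
    intro x
    have repP : x * P = ∑ i : Fin (m+1),
        ι ((Fin.cases (c x (Fin.last m) * ϖ) (fun j => c x j.castSucc) :
            Fin (m+1) → K) i) * P ^ (i:ℕ) := by
      conv_lhs => rw [hc x]
      exact aux_shift ι m P ϖ hPn (c x)
    rw [hTf (x * P) _ repP, hTf x (c x) (hc x),
      aux_shift ι m Q (τ₀ ϖ) hQn (fun i => τ₀ (c x i))]
    refine Finset.sum_congr rfl fun i _ => ?_
    congr 1
    congr 1
    induction i using Fin.cases with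
    | zero => simp [map_mul]
    | succ j => simp
  have hTsum : ∀ (s : Finset (Fin (m+1))) (f : Fin (m+1) → A),
      Tf (∑ i ∈ s, f i) = ∑ i ∈ s, Tf (f i) := by
    intro s f
    induction s using Finset.cons_induction with
    | empty => simpa using hT0
    | cons a s ha ih => rw [Finset.sum_cons, Finset.sum_cons, hTadd, ih]
  have hTPpow : ∀ (x : A) (k : ℕ), Tf (x * P ^ k) = Tf x * Q ^ k := by
    intro x k
    induction k with
    | zero => simp
    | succ k ih => rw [pow_succ, ← mul_assoc, hTmulP, ih, mul_assoc, ← pow_succ]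
  have hTmul : ∀ x y : A, Tf (x * y) = Tf x * Tf y := by
    intro x y
    conv_lhs => rw [hc y, Finset.mul_sum]
    rw [hTsum]
    have he : ∀ i : Fin (m+1), Tf (x * (ι (c y i) * P ^ (i:ℕ)))
        = Tf x * (ι (τ₀ (c y i)) * Q ^ (i:ℕ)) := by
      intro i
      rw [← mul_assoc, hTPpow, hTright, mul_assoc]
    simp only [he]
    rw [← Finset.mul_sum, ← hTf y (c y) (hc y)]
  -- package as ring hom
  let Thom : A →+* A :=
    { toFun := Tf, map_one' := hT1, map_mul' := fun x y => hTmul x y,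
      map_zero' := hT0, map_add' := fun x y => hTadd x y }
  have hext : ∀ (f g : A →+* A), (∀ a, f (ι a) = g (ι a)) → f P = g P →
      ∀ x, f x = g x := by
    intro f g h1 h2 x
    rw [hc x, map_sum, map_sum]
    refine Finset.sum_congr rfl fun i _ => ?_
    rw [map_mul, map_mul, map_pow, map_pow, h1, h2]
  have ht0 : ι (β⁻¹ ^ 2) ≠ 0 := by
    intro h
    have h' : (β⁻¹ ^ 2 : K) = 0 := ι.injective (by simpa using h)
    exact pow_ne_zero 2 (inv_ne_zero hβ0) h'
  have hTPval : Tf P = Q := by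
    have h := hTmulP 1
    rwa [one_mul, hT1, one_mul] at h
  have hτα : τ₀ α = α := by rw [hα, map_pow, hτβ]
  have hT2ι : ∀ a : K, Tf (Tf (ι a)) = ι a := by
    intro a; rw [hTι, hTι, hτ2]
  have hT2P : Tf (Tf P) = ι (α * α) * P := by
    rw [hTPval, hQdef, hTsmul, hτα, hTPval, hQdef, ← mul_assoc, ← map_mul]
  have hconjι : ∀ a : K, ι (β⁻¹^2) * ι a * (ι (β⁻¹^2))⁻¹ = ι a := by
    intro a
    rw [← map_mul, mul_comm, map_mul, mul_assoc, mul_inv_cancel₀ ht0, mul_one]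
  have hKey : α * α * σ (β⁻¹ ^ 2) = β⁻¹ ^ 2 := by
    rw [hα, map_pow, map_inv₀, hσβ]
    have key : β ^ ((r+2) - 1) * (β ^ (r+2))⁻¹ = β⁻¹ := by
      have hp : (β:K) ^ (r+2) = β ^ ((r+2)-1) * β := by
        rw [show (r+2)-1 = r+1 from rfl, pow_succ]
      rw [hp, mul_inv, ← mul_assoc, mul_inv_cancel₀ (pow_ne_zero _ hβ0), one_mul]
    calc β ^ ((r+2)-1) * β ^ ((r+2)-1) * ((β ^ (r+2))⁻¹) ^ 2
        = (β ^ ((r+2)-1) * (β ^ (r+2))⁻¹) ^ 2 := by ring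
      _ = β⁻¹ ^ 2 := by rw [key]
  have hconjP : ι (β⁻¹^2) * P * (ι (β⁻¹^2))⁻¹ = ι (α * α) * P := by
    have h5 : ι (β⁻¹^2) * P = ι (α*α) * P * ι (β⁻¹^2) := by
      rw [mul_assoc, hrel, ← mul_assoc, ← map_mul, hKey]
    rw [h5, mul_assoc, mul_inv_cancel₀ ht0, mul_one]
  have hconjAll : ∀ x : A, Tf (Tf x) = ι (β⁻¹^2) * x * (ι (β⁻¹^2))⁻¹ := by
    intro x
    have hcomp : ∀ y : A, (Thom.comp Thom) y = Tf (Tf y) := fun y => rfl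
    have hconjapp : ∀ y : A, auxConj (ι (β⁻¹^2)) ht0 y
        = ι (β⁻¹^2) * y * (ι (β⁻¹^2))⁻¹ := fun y => rfl
    rw [← hcomp, ← hconjapp]
    exact hext (Thom.comp Thom) (auxConj (ι (β⁻¹^2)) ht0)
      (fun a => by rw [hcomp, hconjapp, hT2ι, hconjι])
      (by rw [hcomp, hconjapp, hT2P, hconjP]) x
  have hinj : Function.Injective Tf := by
    intro x y h
    have h2 : Tf (Tf x) = Tf (Tf y) := congrArg Tf h
    rw [hconjAll, hconjAll] at h2
    exact mul_left_cancel₀ ht0 (mul_right_cancel₀ (inv_ne_zero ht0) h2)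
  have hsurj : Function.Surjective Tf := by
    intro y
    refine ⟨Tf ((ι (β⁻¹^2))⁻¹ * y * ι (β⁻¹^2)), ?_⟩
    rw [hconjAll]
    simp only [← mul_assoc]
    rw [mul_inv_cancel₀ ht0, one_mul, mul_assoc, mul_inv_cancel₀ ht0, mul_one]
  let T : A ≃+* A := RingEquiv.ofBijective Thom ⟨hinj, hsurj⟩
  have hTapp : ∀ x : A, T x = Tf x := fun _ => rfl
  refine ⟨hQn, goal2, T, fun a => by rw [hTapp, hTι],
    by rw [hTapp, hTPval],
    fun d => by rw [hTapp, hTapp]; exact hconjAll d,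
    by rw [hTapp, hTι, map_pow, map_inv₀, hτβ]⟩
end
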